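/- Let n ≥ 6 be an integer with n ≡ 2 (mod 12) or n ≡ 6 (mod 12). Then the domination number of the 3-token graph of the complete graph satisfies γ(F_3(K_n)) = n²/12 − n/6, i.e., 12·γ(F_3(K_n)) = n² − 2n. -/

import Mathlib

/-- The `k`-token graph of a simple graph `G`: vertices are the `k`-element
subsets of `V(G)`, and two subsets are adjacent when their symmetric difference
is a pair `{u, v}` of adjacent vertices of `G`. -/
def tokenGraph {V : Type*} [DecidableEq V] (G : SimpleGraph V) (k : ℕ) :
    SimpleGraph {A : Finset V // A.card = k} where
  Adj A B := ∃ u v : V, G.Adj u v ∧ symmDiff A.1 B.1 = {u, v}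
  symm := by
    constructor
    rintro A B ⟨u, v, huv, h⟩
    exact ⟨u, v, huv, by rwa [symmDiff_comm]⟩
  loopless := by
    constructor
    rintro A ⟨u, v, huv, h⟩
    rw [symmDiff_self] at h
    have : u ∈ (⊥ : Finset V) := h ▸ Finset.mem_insert_self u {v}
    simp at this

/-- A dominating set: every vertex is in `D` or adjacent to a vertex of `D`. -/
def IsDominatingSet {V : Type*} (G : SimpleGraph V) (D : Set V) : Prop :=
  ∀ v : V, v ∈ D ∨ ∃ u ∈ D, G.Adj u v

/-- The domination number: minimum cardinality of a dominating set. -/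
noncomputable def dominationNumber {V : Type*} [Fintype V] (G : SimpleGraph V) : ℕ :=
  sInf {m : ℕ | ∃ D : Finset V, IsDominatingSet G ↑D ∧ D.card = m}

/-- The star graph `S n` with vertex set `{0, 1, …, n}`, center `0` adjacent to
each leaf `1, …, n`. -/
def starGraph (n : ℕ) : SimpleGraph (Fin (n + 1)) where
  Adj u v := u ≠ v ∧ (u = 0 ∨ v = 0)
  symm := by constructor; rintro u v ⟨h1, h2⟩; exact ⟨h1.symm, h2.symm⟩
  loopless := by constructor; rintro u ⟨h1, _⟩; exact h1 rfl


/-!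
In `F₃(Kₙ)` two triples are adjacent exactly when they share two points, so a family `D` of
triples dominates iff every triple of points contains a pair lying in a block of `D`. The pairs
lying in no block then form a triangle-free graph, which has at most `n²/4` edges by Mantel's
theorem, while the blocks cover at most `3|D|` pairs; hence `12|D| ≥ n² - 2n`.

Conversely, write `n = 2m` with `m ≡ 1, 3 (mod 6)` and split the points into two halves of size
`m`. A Steiner triple system on each half (Skolem's construction for `m = 6t + 1`, Bose's for
`m = 6t + 3`) covers every pair inside a half with `m(m - 1)/6` triples, and any three points
have two in the same half. This dominating set has `m(m - 1)/3 = (n² - 2n)/12` triples.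
-/

open Finset

theorem Nat.two_mul_choose_two (n : ℕ) : 2 * n.choose 2 = n * (n - 1) := by
  rw [Nat.choose_two_right]
  exact Nat.mul_div_cancel' (Nat.even_mul_pred_self n).two_dvd

section TokenGraph

variable {V : Type*} [DecidableEq V] {k : ℕ}

theorem tokenGraph_top_adj_iff {A B : {A : Finset V // #A = k}} :
    (tokenGraph ⊤ k).Adj A B ↔ #(A.1 ∩ B.1) + 1 = k := by
  obtain ⟨A, rfl⟩ := A
  obtain ⟨B, hB⟩ := B
  dsimp only
  have hAB := card_inter_add_card_sdiff A B
  have hBA := card_inter_add_card_sdiff B A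
  rw [inter_comm] at hBA
  constructor
  · rintro ⟨u, v, huv, h⟩
    have : #(A \ B) + #(B \ A) = 2 := by
      rw [← card_union_of_disjoint disjoint_sdiff_sdiff, ← sup_eq_union, ← symmDiff_def, h,
        card_pair huv.ne]
    omega
  · intro h
    obtain ⟨u, hu⟩ := card_eq_one.1 (show #(A \ B) = 1 by omega)
    obtain ⟨v, hv⟩ := card_eq_one.1 (show #(B \ A) = 1 by omega)
    have huA : u ∈ A := (mem_sdiff.1 (hu ▸ mem_singleton_self u)).1
    have hvA : v ∉ A := (mem_sdiff.1 (hv ▸ mem_singleton_self v)).2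
    refine ⟨u, v, fun huv => hvA (huv ▸ huA), ?_⟩
    rw [symmDiff_def, sup_eq_union, hu, hv]
    rfl

theorem eq_or_tokenGraph_top_adj_iff {A B : {A : Finset V // #A = k}} :
    A = B ∨ (tokenGraph ⊤ k).Adj A B ↔ k ≤ #(A.1 ∩ B.1) + 1 := by
  rw [tokenGraph_top_adj_iff]
  constructor
  · rintro (rfl | h)
    · simp [A.2]
    · omega
  intro h
  by_cases hk : #(A.1 ∩ B.1) = k
  · have hA : A.1 ∩ B.1 = A.1 := eq_of_subset_of_card_le inter_subset_left (by rw [hk, A.2])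
    have hB : A.1 ∩ B.1 = B.1 := eq_of_subset_of_card_le inter_subset_right (by rw [hk, B.2])
    exact .inl (Subtype.ext (hA.symm.trans hB))
  · have : #(A.1 ∩ B.1) ≤ k := (card_le_card inter_subset_left).trans_eq A.2
    exact .inr (by omega)

theorem isDominatingSet_tokenGraph_top_iff {D : Set {A : Finset V // #A = k}} :
    IsDominatingSet (tokenGraph ⊤ k) D ↔
      ∀ T : {A : Finset V // #A = k}, ∃ A ∈ D, k ≤ #(A.1 ∩ T.1) + 1 := by
  refine forall_congr' fun T => ?_
  simp only [← eq_or_tokenGraph_top_adj_iff]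
  constructor
  · rintro (hT | ⟨A, hA, hAT⟩)
    exacts [⟨T, hT, .inl rfl⟩, ⟨A, hA, .inr hAT⟩]
  · rintro ⟨A, hA, rfl | hAT⟩
    exacts [.inl hA, .inr ⟨A, hA, hAT⟩]

end TokenGraph

section DominationNumber

variable {V : Type*} [Fintype V] {G : SimpleGraph V}

theorem dominationNumber_le_card {D : Finset V} (hD : IsDominatingSet G D) :
    dominationNumber G ≤ #D :=
  Nat.sInf_le ⟨D, hD, rfl⟩

theorem exists_isDominatingSet_card_eq_dominationNumber (G : SimpleGraph V) :
    ∃ D : Finset V, IsDominatingSet G D ∧ #D = dominationNumber G :=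
  Nat.sInf_mem (s := {m | ∃ D : Finset V, IsDominatingSet G D ∧ #D = m})
    ⟨_, univ, fun v => .inl (mem_coe.2 (mem_univ v)), rfl⟩

end DominationNumber

theorem SimpleGraph.CliqueFree.four_mul_card_edgeFinset_le {V : Type*} [Fintype V]
    {G : SimpleGraph V} [DecidableRel G.Adj] (h : G.CliqueFree 3) :
    4 * #G.edgeFinset ≤ Fintype.card V ^ 2 := by
  have := h.card_edgeFinset_le (r := 2)
  simp only [Nat.add_one_sub_one, mul_one] at this
  have hmod : Fintype.card V % 2 < 2 := Nat.mod_lt _ two_pos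
  interval_cases Fintype.card V % 2 <;> simp at this <;> omega

section CoveredPairs

variable {V : Type*}

def coveredGraph (D : Finset (Finset V)) : SimpleGraph V where
  Adj a b := a ≠ b ∧ ∃ d ∈ D, a ∈ d ∧ b ∈ d
  symm := ⟨fun _ _ ⟨hab, d, hd, ha, hb⟩ => ⟨hab.symm, d, hd, hb, ha⟩⟩
  loopless := ⟨fun _ h => h.1 rfl⟩

theorem coveredGraph_adj {D : Finset (Finset V)} {a b : V} :
    (coveredGraph D).Adj a b ↔ a ≠ b ∧ ∃ d ∈ D, a ∈ d ∧ b ∈ d :=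
  Iff.rfl

variable [DecidableEq V] (D : Finset (Finset V))

theorem card_edgeFinset_coveredGraph_le [Fintype V] [DecidableRel (coveredGraph D).Adj] :
    #(coveredGraph D).edgeFinset ≤ ∑ d ∈ D, (#d).choose 2 := by
  calc #(coveredGraph D).edgeFinset
      ≤ #(D.biUnion fun d => d.offDiag.image Sym2.mk.uncurry) := by
        refine card_le_card fun e he => ?_
        induction e using Sym2.ind with
        | h a b =>
          obtain ⟨hab, d, hd, ha, hb⟩ := coveredGraph_adj.1 (SimpleGraph.mem_edgeFinset.1 he)
          exact mem_biUnion.2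
            ⟨d, hd, mem_image.2 ⟨(a, b), mem_offDiag.2 ⟨ha, hb, hab⟩, rfl⟩⟩
    _ ≤ ∑ d ∈ D, (#d).choose 2 := by
        refine card_biUnion_le.trans (sum_le_sum fun d _ => ?_)
        rw [Sym2.card_image_offDiag]

theorem cliqueFree_three_compl_coveredGraph
    (hD : ∀ T : Finset V, #T = 3 → ∃ d ∈ D, 2 ≤ #(d ∩ T)) :
    (coveredGraph D)ᶜ.CliqueFree 3 := by
  intro T hT
  obtain ⟨d, hd, hdT⟩ := hD T hT.card_eq
  obtain ⟨a, ha, b, hb, hab⟩ := one_lt_card.1 hdT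
  rw [mem_inter] at ha hb
  exact (hT.isClique ha.2 hb.2 hab).2 (coveredGraph_adj.2 ⟨hab, d, hd, ha.1, hb.1⟩)

theorem card_sq_sub_two_mul_le_twelve_mul_card [Fintype V] (h3 : ∀ d ∈ D, #d = 3)
    (hD : ∀ T : Finset V, #T = 3 → ∃ d ∈ D, 2 ≤ #(d ∩ T)) :
    Fintype.card V ^ 2 - 2 * Fintype.card V ≤ 12 * #D := by
  classical
  have hsplit : (Fintype.card V).choose 2 ≤
      #(coveredGraph D).edgeFinset + #(coveredGraph D)ᶜ.edgeFinset := by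
    calc (Fintype.card V).choose 2
        = #((coveredGraph D) ⊔ (coveredGraph D)ᶜ).edgeFinset := by
          rw [← SimpleGraph.card_edgeFinset_top_eq_card_choose_two]
          congr!
          exact sup_compl_eq_top.symm
      _ ≤ _ := by
          rw [SimpleGraph.edgeFinset_sup]
          exact card_union_le _ _
  have hcovered : #(coveredGraph D).edgeFinset ≤ 3 * #D := by
    convert card_edgeFinset_coveredGraph_le D using 1
    rw [sum_congr rfl fun d hd => by rw [h3 d hd], sum_const, smul_eq_mul, mul_comm]
    rfl
  have hmantel := (cliqueFree_three_compl_coveredGraph D hD).four_mul_card_edgeFinset_le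
  have hpairs := Nat.two_mul_choose_two (Fintype.card V)
  generalize Fintype.card V = n at *
  cases n with
  | zero => simp
  | succ n =>
    simp only [Nat.add_one_sub_one] at hpairs
    rw [Nat.sub_le_iff_le_add]
    nlinarith

end CoveredPairs

section TripleCovers

variable {α β : Type*}

/-- Together with `6 * #S ≤ m * (m - 1)` for `m` points, this makes `S` a Steiner triple
system. -/
structure IsTripleCover (S : Finset (Finset α)) : Prop where
  card_eq_three : ∀ s ∈ S, #s = 3
  exists_mem : ∀ ⦃x y : α⦄, x ≠ y → ∃ s ∈ S, x ∈ s ∧ y ∈ s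

theorem IsTripleCover.map {S : Finset (Finset α)} (hS : IsTripleCover S) (e : α ≃ β) :
    IsTripleCover (S.map (mapEmbedding e.toEmbedding).toEmbedding) where
  card_eq_three s hs := by
    obtain ⟨t, ht, rfl⟩ := mem_map.1 hs
    simpa using hS.card_eq_three t ht
  exists_mem x y hxy := by
    obtain ⟨s, hs, hx, hy⟩ := hS.exists_mem (e.symm.injective.ne hxy)
    exact ⟨_, mem_map_of_mem _ hs, by simpa using hx, by simpa using hy⟩

end TripleCovers

section Quasigroups

theorem Fin.three_eq_or_eq_add_one_or_eq_add_one (i j : Fin 3) :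
    i = j ∨ j = i + 1 ∨ i = j + 1 := by
  revert i j
  decide

variable {Q : Type*} (op : Q → Q → Q)

theorem exists_mem_of_quasigroup {γ : Type*} (hsolve : ∀ x y, ∃ z, op x z = y)
    (e : Q × Fin 3 → γ) (S : Finset (Finset γ))
    (hhor : ∀ x y i, x ≠ y →
      ∃ s ∈ S, e (x, i) ∈ s ∧ e (y, i) ∈ s ∧ e (op x y, i + 1) ∈ s)
    (hdiag : ∀ x i, ∃ s ∈ S, e (x, i) ∈ s ∧ e (op x x, i + 1) ∈ s)
    {p q : Q × Fin 3} (hpq : p ≠ q) : ∃ s ∈ S, e p ∈ s ∧ e q ∈ s := by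
  have hnext : ∀ x y i, ∃ s ∈ S, e (x, i) ∈ s ∧ e (y, i + 1) ∈ s := by
    intro x y i
    obtain ⟨z, rfl⟩ := hsolve x y
    by_cases hxz : x = z
    · exact hxz ▸ hdiag x i
    · obtain ⟨s, hs, hx, -, hz⟩ := hhor x z i hxz
      exact ⟨s, hs, hx, hz⟩
  obtain ⟨x, i⟩ := p
  obtain ⟨y, j⟩ := q
  rcases Fin.three_eq_or_eq_add_one_or_eq_add_one i j with rfl | rfl | rfl
  · obtain ⟨s, hs, hx, hy, -⟩ := hhor x y i fun h => hpq (h ▸ rfl)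
    exact ⟨s, hs, hx, hy⟩
  · exact hnext x y i
  · obtain ⟨s, hs, hy, hx⟩ := hnext y x j
    exact ⟨s, hs, hx, hy⟩

variable [Fintype Q] [DecidableEq Q]

/-- Indexed by unordered pairs `{x, y}`, so that each triple is counted once. -/
def quasigroupTriples (hop : ∀ x y, op x y = op y x) : Finset (Finset (Q × Fin 3)) :=
  ((univ.offDiag.image Sym2.mk.uncurry) ×ˢ univ).image fun zi : Sym2 Q × Fin 3 =>
    Sym2.lift ⟨fun x y => {(x, zi.2), (y, zi.2), (op x y, zi.2 + 1)},
      fun x y => by dsimp only; rw [hop, insert_comm]⟩ zi.1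

variable {op} (hop : ∀ x y, op x y = op y x)

theorem mem_quasigroupTriples {x y : Q} (hxy : x ≠ y) (i : Fin 3) :
    {(x, i), (y, i), (op x y, i + 1)} ∈ quasigroupTriples op hop :=
  mem_image.2 ⟨(s(x, y), i),
    mem_product.2 ⟨mem_image.2 ⟨(x, y), by simpa [mem_offDiag] using hxy, rfl⟩, mem_univ i⟩, rfl⟩

theorem card_eq_three_of_mem_quasigroupTriples {s : Finset (Q × Fin 3)}
    (hs : s ∈ quasigroupTriples op hop) : #s = 3 := by
  obtain ⟨⟨z, i⟩, hz, rfl⟩ := mem_image.1 hs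
  obtain ⟨⟨x, y⟩, hxy, rfl⟩ := mem_image.1 (mem_product.1 hz).1
  refine card_eq_three.2 ⟨_, _, _, ?_, ?_, ?_, rfl⟩ <;> simp_all

theorem card_quasigroupTriples_le :
    #(quasigroupTriples op hop) ≤ 3 * (Fintype.card Q).choose 2 := by
  refine card_image_le.trans ?_
  rw [card_product, Sym2.card_image_offDiag, card_univ, card_univ, Fintype.card_fin, mul_comm]

end Quasigroups

section Bose

variable {Q : Type*} [Fintype Q] [DecidableEq Q] {op : Q → Q → Q}
  (hop : ∀ x y, op x y = op y x)

def boseTriples : Finset (Finset (Q × Fin 3)) :=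
  univ.image (fun x => {x} ×ˢ univ) ∪ quasigroupTriples op hop

theorem isTripleCover_boseTriples (hidem : ∀ x, op x x = x)
    (hsolve : ∀ x y, ∃ z, op x z = y) : IsTripleCover (boseTriples hop) where
  card_eq_three s hs := by
    rcases mem_union.1 hs with hs | hs
    · obtain ⟨x, -, rfl⟩ := mem_image.1 hs
      simp
    · exact card_eq_three_of_mem_quasigroupTriples hop hs
  exists_mem p q hpq := by
    refine exists_mem_of_quasigroup op hsolve id _ (fun x y i hxy => ?_) (fun x i => ?_) hpq
    · exact ⟨_, mem_union_right _ (mem_quasigroupTriples hop hxy i), by simp⟩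
    · exact ⟨{x} ×ˢ univ, mem_union_left _ (mem_image_of_mem _ (mem_univ x)), by simp [hidem]⟩

theorem card_boseTriples_le :
    #(boseTriples hop) ≤ Fintype.card Q + 3 * (Fintype.card Q).choose 2 :=
  (card_union_le _ _).trans (add_le_add (card_image_le.trans_eq card_univ)
    (card_quasigroupTriples_le hop))

theorem isTripleCover_boseTriples_midpoint (R : Type*) [CommRing R] [Fintype R] [DecidableEq R]
    [Invertible (2 : R)] :
    IsTripleCover (boseTriples (op := fun x y : R => ⅟2 * (x + y))
      fun x y => by rw [add_comm x y]) :=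
  isTripleCover_boseTriples _ (fun x => by rw [← two_mul, invOf_mul_cancel_left])
    fun x y => ⟨2 * y - x, by rw [add_sub_cancel, invOf_mul_cancel_left]⟩

end Bose

section Skolem

variable (t : ℕ)

def skolemHalf (s : Fin (t + t)) : Fin (t + t) :=
  if s.val % 2 = 0 then Fin.castAdd t ⟨s / 2, by omega⟩ else Fin.natAdd t ⟨s / 2, by omega⟩

theorem skolemHalf_surjective : Function.Surjective (skolemHalf t) := by
  intro y
  induction y using Fin.addCases with
  | left k => exact ⟨⟨2 * k, by omega⟩, by simp [skolemHalf]⟩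
  | right k =>
    exact ⟨⟨2 * k + 1, by omega⟩, by simp [skolemHalf, Fin.ext_iff, Nat.add_mod]; omega⟩

theorem skolemHalf_add_self (k : Fin t) (hk : k.val + k.val < t + t) :
    skolemHalf t ⟨k + k, hk⟩ = Fin.castAdd t k := by
  have h2 : (k.val + k.val) % 2 = 0 := by omega
  ext
  simp only [skolemHalf, h2, if_true, Fin.val_castAdd]
  omega

/-- Skolem's half-idempotent commutative quasigroup of order `2t`. -/
def skolemOp (x y : Fin (t + t)) : Fin (t + t) := skolemHalf t (x + y)

theorem skolemOp_comm (x y : Fin (t + t)) : skolemOp t x y = skolemOp t y x := by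
  rw [skolemOp, skolemOp, add_comm x y]

theorem exists_skolemOp_eq (x y : Fin (t + t)) : ∃ z, skolemOp t x z = y := by
  have : NeZero (t + t) := ⟨x.pos.ne'⟩
  obtain ⟨s, rfl⟩ := skolemHalf_surjective t y
  exact ⟨s - x, by rw [skolemOp, add_sub_cancel]⟩

theorem skolemOp_castAdd_self (k : Fin t) :
    skolemOp t (Fin.castAdd t k) (Fin.castAdd t k) = Fin.castAdd t k := by
  have hk : k.val + k.val < t + t := by omega
  have hsum : Fin.castAdd t k + Fin.castAdd t k = ⟨k + k, hk⟩ := by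
    ext
    rw [Fin.val_add, Fin.val_castAdd, Nat.mod_eq_of_lt hk]
  rw [skolemOp, hsum, skolemHalf_add_self]

theorem skolemOp_natAdd_self (k : Fin t) :
    skolemOp t (Fin.natAdd t k) (Fin.natAdd t k) = Fin.castAdd t k := by
  have hk : k.val + k.val < t + t := by omega
  have hsum : Fin.natAdd t k + Fin.natAdd t k = ⟨k + k, hk⟩ := by
    ext
    rw [Fin.val_add, Fin.val_natAdd,
      show t + k.val + (t + k.val) = k.val + k.val + (t + t) by omega, Nat.add_mod_right,
      Nat.mod_eq_of_lt hk]
  rw [skolemOp, hsum, skolemHalf_add_self]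

/-- Skolem's triples on the `6t + 1` points `{∞} ∪ Fin (2t) × Fin 3`, with `∞` encoded as
`none`. -/
def skolemTriples : Finset (Finset (Option (Fin (t + t) × Fin 3))) :=
  (quasigroupTriples (skolemOp t) (skolemOp_comm t)).map
      (mapEmbedding Function.Embedding.some).toEmbedding ∪
    univ.image (fun k : Fin t => ({Fin.castAdd t k} ×ˢ univ).map Function.Embedding.some) ∪
    univ.image fun ki : Fin t × Fin 3 =>
      {none, some (Fin.natAdd t ki.1, ki.2), some (Fin.castAdd t ki.1, ki.2 + 1)}

theorem isTripleCover_skolemTriples : IsTripleCover (skolemTriples t) := by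
  have hhor : ∀ x y i, x ≠ y → ∃ s ∈ skolemTriples t,
      some (x, i) ∈ s ∧ some (y, i) ∈ s ∧ some (skolemOp t x y, i + 1) ∈ s :=
    fun x y i hxy => ⟨_, mem_union_left _ (mem_union_left _ (mem_map_of_mem _
      (mem_quasigroupTriples (skolemOp_comm t) hxy i))), by simp⟩
  have hvert : ∀ k i, ∃ s ∈ skolemTriples t,
      some (Fin.castAdd t k, i) ∈ s ∧ some (Fin.castAdd t k, i + 1) ∈ s := fun k i =>
    ⟨_, mem_union_left _ (mem_union_right _ (mem_image_of_mem _ (mem_univ k))), by simp⟩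
  have hinf : ∀ k i, ∃ s ∈ skolemTriples t, none ∈ s ∧
      some (Fin.natAdd t k, i) ∈ s ∧ some (Fin.castAdd t k, i + 1) ∈ s := fun k i =>
    ⟨_, mem_union_right _ (mem_image_of_mem _ (mem_univ (k, i))), by simp⟩
  have hdiag : ∀ x i, ∃ s ∈ skolemTriples t,
      some (x, i) ∈ s ∧ some (skolemOp t x x, i + 1) ∈ s := by
    intro x i
    induction x using Fin.addCases with
    | left k =>
      rw [skolemOp_castAdd_self]
      exact hvert k i
    | right k =>
      obtain ⟨s, hs, -, hk, hk'⟩ := hinf k i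
      rw [skolemOp_natAdd_self]
      exact ⟨s, hs, hk, hk'⟩
  have hnone : ∀ p, ∃ s ∈ skolemTriples t, none ∈ s ∧ some p ∈ s := by
    rintro ⟨x, i⟩
    induction x using Fin.addCases with
    | left k =>
      obtain ⟨s, hs, h0, -, hk⟩ := hinf k (i - 1)
      exact ⟨s, hs, h0, by simpa using hk⟩
    | right k =>
      obtain ⟨s, hs, h0, hk, -⟩ := hinf k i
      exact ⟨s, hs, h0, hk⟩
  refine ⟨fun s hs => ?_, fun p q hpq => ?_⟩
  · rcases mem_union.1 hs with hs | hs
    · rcases mem_union.1 hs with hs | hs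
      · obtain ⟨u, hu, rfl⟩ := mem_map.1 hs
        simpa using card_eq_three_of_mem_quasigroupTriples (skolemOp_comm t) hu
      · obtain ⟨k, -, rfl⟩ := mem_image.1 hs
        simp
    · obtain ⟨⟨k, i⟩, -, rfl⟩ := mem_image.1 hs
      refine card_eq_three.2 ⟨_, _, _, ?_, ?_, ?_, rfl⟩ <;> simp
  rcases p with _ | p <;> rcases q with _ | q
  · exact absurd rfl hpq
  · exact hnone q
  · obtain ⟨s, hs, h0, hp⟩ := hnone p
    exact ⟨s, hs, hp, h0⟩
  · exact exists_mem_of_quasigroup (skolemOp t) (exists_skolemOp_eq t) some _ hhor hdiag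
      fun h => hpq (congrArg some h)

theorem card_skolemTriples_le : #(skolemTriples t) ≤ 3 * (t + t).choose 2 + t + 3 * t := by
  refine (card_union_le _ _).trans
    (add_le_add ((card_union_le _ _).trans (add_le_add ?_ ?_)) ?_)
  · simpa using card_quasigroupTriples_le (skolemOp_comm t)
  · exact card_image_le.trans (by simp)
  · exact card_image_le.trans (by simp [mul_comm])

end Skolem

theorem exists_isTripleCover {α : Type*} [Fintype α] [DecidableEq α]
    (h : Fintype.card α % 6 = 1 ∨ Fintype.card α % 6 = 3) :
    ∃ S : Finset (Finset α), IsTripleCover S ∧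
      6 * #S ≤ Fintype.card α * (Fintype.card α - 1) := by
  rcases h with h | h
  · obtain ⟨t, ht⟩ : ∃ t, Fintype.card α = 6 * t + 1 := ⟨Fintype.card α / 6, by omega⟩
    have e : Option (Fin (t + t) × Fin 3) ≃ α := Fintype.equivOfCardEq (by simp; omega)
    refine ⟨_, (isTripleCover_skolemTriples t).map e, ?_⟩
    have hcard := card_skolemTriples_le t
    have hpairs := Nat.two_mul_choose_two (t + t)
    rw [card_map, ht, Nat.add_sub_cancel]
    cases t with
    | zero => simp_all
    | succ t =>
      simp only [show t + 1 + (t + 1) - 1 = 2 * t + 1 by omega] at hpairs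
      nlinarith
  · obtain ⟨t, ht⟩ : ∃ t, Fintype.card α = 6 * t + 3 := ⟨Fintype.card α / 6, by omega⟩
    have hzero : (2 * t + 1 : ZMod (2 * t + 1)) = 0 := mod_cast ZMod.natCast_self (2 * t + 1)
    let _ : Invertible (2 : ZMod (2 * t + 1)) :=
      ⟨t + 1, by linear_combination hzero, by linear_combination hzero⟩
    have e : ZMod (2 * t + 1) × Fin 3 ≃ α := Fintype.equivOfCardEq (by simp; omega)
    refine ⟨_, (isTripleCover_boseTriples_midpoint (ZMod (2 * t + 1))).map e, ?_⟩
    have hcard := card_boseTriples_le (Q := ZMod (2 * t + 1)) (op := fun x y => ⅟2 * (x + y))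
      fun x y => by rw [add_comm x y]
    have hpairs := Nat.two_mul_choose_two (2 * t + 1)
    rw [ZMod.card] at hcard
    rw [Nat.add_sub_cancel] at hpairs
    rw [card_map, ht, show 6 * t + 3 - 1 = 6 * t + 2 by omega]
    nlinarith

theorem exists_triples_of_equiv_prod {ι α V : Type*} [Fintype ι] [DecidableEq V]
    (e : ι × α ≃ V) {S : Finset (Finset α)} (hS : IsTripleCover S) :
    ∃ D : Finset (Finset V), (∀ d ∈ D, #d = 3) ∧ #D ≤ Fintype.card ι * #S ∧
      ∀ T : Finset V, Fintype.card ι < #T → ∃ d ∈ D, 2 ≤ #(d ∩ T) := by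
  let slice (i : ι) : α ↪ V :=
    ⟨fun a => e (i, a), fun a b h => (Prod.mk.inj (e.injective h)).2⟩
  refine ⟨(univ ×ˢ S).image fun is => is.2.map (slice is.1), ?_, ?_, fun T hT => ?_⟩
  · intro d hd
    obtain ⟨⟨i, s⟩, hs, rfl⟩ := mem_image.1 hd
    rw [card_map, hS.card_eq_three s (mem_product.1 hs).2]
  · exact card_image_le.trans (by rw [card_product, card_univ])
  -- pigeonhole: two points of `T` lie in the same copy of `α`
  obtain ⟨x, hx, y, hy, hxy, hc⟩ := exists_ne_map_eq_of_card_lt_of_maps_to (t := univ)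
    (by rwa [card_univ]) (f := fun v => (e.symm v).1) fun _ _ => mem_coe.2 (mem_univ _)
  obtain ⟨⟨i, a⟩, rfl⟩ := e.surjective x
  obtain ⟨⟨j, b⟩, rfl⟩ := e.surjective y
  obtain rfl : i = j := by simpa using hc
  obtain ⟨s, hs, ha, hb⟩ := hS.exists_mem (show a ≠ b from fun hab => hxy (hab ▸ rfl))
  exact ⟨s.map (slice i), mem_image.2 ⟨(i, s), mem_product.2 ⟨mem_univ i, hs⟩, rfl⟩,
    one_lt_card.2 ⟨_, mem_inter.2 ⟨mem_map_of_mem _ ha, hx⟩,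
      _, mem_inter.2 ⟨mem_map_of_mem _ hb, hy⟩, hxy⟩⟩

section DominationOfThreeTokens

variable {V : Type*} [Fintype V] [DecidableEq V]

theorem card_sq_sub_two_mul_le_twelve_mul_dominationNumber :
    Fintype.card V ^ 2 - 2 * Fintype.card V ≤
      12 * dominationNumber (tokenGraph (⊤ : SimpleGraph V) 3) := by
  obtain ⟨D, hD, hcard⟩ := exists_isDominatingSet_card_eq_dominationNumber
    (tokenGraph (⊤ : SimpleGraph V) 3)
  rw [← hcard, ← card_map (Function.Embedding.subtype _)]
  refine card_sq_sub_two_mul_le_twelve_mul_card _ (fun d hd => ?_) fun T hT => ?_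
  · obtain ⟨A, -, rfl⟩ := mem_map.1 hd
    exact A.2
  · obtain ⟨A, hA, hAT⟩ := isDominatingSet_tokenGraph_top_iff.1 hD ⟨T, hT⟩
    exact ⟨A.1, mem_map_of_mem _ hA, by dsimp only at hAT; omega⟩

theorem dominationNumber_le_card_of_forall_two_le_card_inter {D : Finset (Finset V)}
    (h3 : ∀ d ∈ D, #d = 3) (hD : ∀ T : Finset V, #T = 3 → ∃ d ∈ D, 2 ≤ #(d ∩ T)) :
    dominationNumber (tokenGraph (⊤ : SimpleGraph V) 3) ≤ #D := by
  refine (dominationNumber_le_card (D := D.subtype (#· = 3)) ?_).trans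
    ((card_subtype _ _).trans_le (card_filter_le _ _))
  refine isDominatingSet_tokenGraph_top_iff.2 fun T => ?_
  obtain ⟨d, hd, hdT⟩ := hD T.1 T.2
  exact ⟨⟨d, h3 d hd⟩, mem_subtype.2 hd, by dsimp only; omega⟩

end DominationOfThreeTokens

theorem domination_three_token_complete_exact_general (n : ℕ)
    (hmod : n % 12 = 2 ∨ n % 12 = 6) :
    12 * dominationNumber (tokenGraph (⊤ : SimpleGraph (Fin n)) 3) = n ^ 2 - 2 * n := by
  refine le_antisymm ?_
    (by simpa using card_sq_sub_two_mul_le_twelve_mul_dominationNumber (V := Fin n))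
  obtain ⟨m, rfl⟩ : ∃ m, n = 2 * m := ⟨n / 2, by omega⟩
  obtain ⟨S, hS, hScard⟩ := exists_isTripleCover (α := Fin m) (by rw [Fintype.card_fin]; omega)
  obtain ⟨D, h3, hDcard, hD⟩ := exists_triples_of_equiv_prod
    (Fintype.equivOfCardEq (by simp) : Fin 2 × Fin m ≃ Fin (2 * m)) hS
  have hγ := dominationNumber_le_card_of_forall_two_le_card_inter h3
    fun T hT => hD T (by simp [hT])
  rw [Fintype.card_fin] at hScard hDcard
  calc 12 * dominationNumber (tokenGraph ⊤ 3) ≤ 4 * (m * (m - 1)) := by omega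
    _ = (2 * m) ^ 2 - 2 * (2 * m) := by
      cases m with
      | zero => rfl
      | succ m => exact Nat.eq_sub_of_add_eq (by rw [Nat.add_one_sub_one]; ring)

/-- If `n ≡ 2` or `6 (mod 12)`, then `γ(F₃(Kₙ)) = n²/12 - n/6`, i.e.
`12·γ(F₃(Kₙ)) = n² - 2n`. -/
theorem domination_three_token_complete_exact (n : ℕ) (hn : 6 ≤ n)
    (hmod : n % 12 = 2 ∨ n % 12 = 6) :
    12 * dominationNumber (tokenGraph (⊤ : SimpleGraph (Fin n)) 3) = n ^ 2 - 2 * n :=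
  domination_three_token_complete_exact_general n hmod
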